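/- (Theorem 4.2, part 1: entropy set for the cubic flux.) Let f(u) = (u³ − 3u)/2 and for u_B ∈ ℝ define E^entropy(u_B) = { u₀ ∈ ℝ : F(u_B) + U'(u_B)·(f(u₀) − f(u_B)) ≥ F(u₀) for every convex entropy pair (U,F) }. When the equation f(u) = f(u_B), u ≠ u_B, has exactly two solutions, denote by u_B^s < u_B^ℓ the smaller and larger of them. Then: E^entropy(u_B) = {u_B} if u_B < −2; E^entropy(−2) = {−2, 1}; E^entropy(u_B) = [u_B^s, 1] ∪ {u_B} if −2 < u_B < −1; E^entropy(u_B) = [−1, 1] if −1 ≤ u_B ≤ 1; E^entropy(u_B) = [−1, u_B^ℓ] ∪ {u_B} if 1 < u_B < 2; E^entropy(2) = {−1, 2}; and E^entropy(u_B) = {u_B} if u_B > 2. -/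

import Mathlib

/-- The cubic flux `f(u) = (u³ − 3u)/2`. -/
noncomputable def cubicFlux : ℝ → ℝ := fun u => (u ^ 3 - 3 * u) / 2

/-- The set of admissible boundary values based on the boundary entropy
inequalities for the cubic flux: `u₀` is admissible iff for every convex
entropy pair `(U,F)` (`U` of class C² with `U'' ≥ 0`, `F` differentiable with
`F' = U' f'`) one has `F(u_B) + U'(u_B)(f(u₀) − f(u_B)) ≥ F(u₀)`. -/
noncomputable def cubicEntropySet (uB : ℝ) : Set ℝ :=
  { u₀ : ℝ | ∀ U F : ℝ → ℝ, ContDiff ℝ 2 U → (∀ u, 0 ≤ deriv (deriv U) u) →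
      Differentiable ℝ F → (∀ u, deriv F u = deriv U u * deriv cubicFlux u) →
      F u₀ ≤ F uB + deriv U uB * (cubicFlux u₀ - cubicFlux uB) }

/-!
For a convex entropy pair, differentiating in `u_B` gives
`F(u_B) + U'(u_B)(f(u₀) − f(u_B)) − F(u₀) = ∫_{u_B}^{u₀} U''(t) (f(t) − f(u₀)) dt`.
Every nonnegative continuous function is the `U''` of some entropy pair, so `u₀` is admissible
exactly when `f(u₀) ≤ f` on `[u_B, u₀]` and `f ≤ f(u₀)` on `[u₀, u_B]`: the
Bardos–LeRoux–Nédélec condition. The cubic increases on `(−∞, −1]`, decreases on `[−1, 1]` and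
increases on `[1, ∞)`, so this condition is read off its graph; since the cubic is odd, the
cases `u_B > 1` are the mirror images of the cases `u_B < −1`.
-/

open Set intervalIntegral Pointwise

def entropySet (f : ℝ → ℝ) (uB : ℝ) : Set ℝ :=
  { u₀ : ℝ | ∀ U F : ℝ → ℝ, ContDiff ℝ 2 U → (∀ u, 0 ≤ deriv (deriv U) u) →
      Differentiable ℝ F → (∀ u, deriv F u = deriv U u * deriv f u) →
      F u₀ ≤ F uB + deriv U uB * (f u₀ - f uB) }

def blnSet (f : ℝ → ℝ) (uB : ℝ) : Set ℝ :=
  { u₀ | (∀ t ∈ Icc uB u₀, f u₀ ≤ f t) ∧ (∀ t ∈ Icc u₀ uB, f t ≤ f u₀) }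

variable {f : ℝ → ℝ}

theorem integral_mul_sub_symm (w g : ℝ → ℝ) (a b c : ℝ) :
    ∫ t in b..a, w t * (g t - c) = ∫ t in a..b, w t * (c - g t) := by
  rw [integral_symm, ← integral_neg]
  congr 1 with t
  ring

theorem nonneg_of_forall_integral_mul_nonneg {g : ℝ → ℝ} (hg : Continuous g) {a b : ℝ}
    (hab : a < b) (h : ∀ w : ℝ → ℝ, Continuous w → (∀ t, 0 ≤ w t) → 0 ≤ ∫ t in a..b, w t * g t) :
    ∀ t ∈ Icc a b, 0 ≤ g t := by
  intro t ht
  by_contra! hneg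
  set w := fun s => max (-g s) 0
  have hwc : Continuous w := hg.neg.max continuous_const
  have hwg : ∀ s, w s * g s = -(w s ^ 2) := by
    intro s
    rcases le_total (-g s) 0 with hs | hs
    · simp [w, max_eq_right hs]
    · simp only [w, max_eq_left hs]
      ring
  have hpos : 0 < ∫ s in a..b, w s ^ 2 :=
    integral_pos hab (hwc.pow 2).continuousOn (fun s _ => sq_nonneg _)
      ⟨t, ht, pow_pos (lt_max_of_lt_left (neg_pos.2 hneg)) 2⟩
  have hnonneg := h w hwc fun s => le_max_right _ _
  simp only [hwg, integral_neg] at hnonneg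
  linarith

section EntropyPairs

variable {U F : ℝ → ℝ}

theorem entropy_gap_eq_integral (hf : Differentiable ℝ f) (hU : ContDiff ℝ 2 U)
    (hF : Differentiable ℝ F) (hF' : ∀ u, deriv F u = deriv U u * deriv f u) (uB u₀ : ℝ) :
    F uB + deriv U uB * (f u₀ - f uB) - F u₀ =
      ∫ t in uB..u₀, deriv (deriv U) t * (f t - f u₀) := by
  obtain ⟨-, -, hU'⟩ := contDiff_succ_iff_deriv.1 (show ContDiff ℝ (1 + 1) U from hU)
  have hgap : ∀ s, HasDerivAt (fun s => F s + deriv U s * (f u₀ - f s))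
      (deriv (deriv U) s * (f u₀ - f s)) s := by
    intro s
    refine ((hF s).hasDerivAt.add ((hU'.differentiable one_ne_zero s).hasDerivAt.mul
      ((hf s).hasDerivAt.const_sub (f u₀)))).congr_deriv ?_
    rw [hF']
    ring
  have hftc := integral_eq_sub_of_hasDerivAt (fun s _ => hgap s)
    (((hU'.continuous_deriv le_rfl).mul
      (continuous_const.sub hf.continuous)).intervalIntegrable uB u₀)
  rw [integral_mul_sub_symm, integral_symm, hftc]
  ring

theorem exists_entropyPair_deriv_deriv_eq (hf : Differentiable ℝ f) {w : ℝ → ℝ}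
    (hw : Continuous w) :
    ∃ U F : ℝ → ℝ, ContDiff ℝ 2 U ∧ deriv (deriv U) = w ∧ Differentiable ℝ F ∧
      ∀ u, deriv F u = deriv U u * deriv f u := by
  set V := fun u => ∫ t in (0 : ℝ)..u, w t
  have hV : ∀ u, HasDerivAt V (w u) u := fun u => (hw.integral_hasStrictDerivAt 0 u).hasDerivAt
  have hVc : Continuous V := continuous_iff_continuousAt.2 fun u => (hV u).continuousAt
  set U := fun u => ∫ t in (0 : ℝ)..u, V t
  have hU : ∀ u, HasDerivAt U (V u) u := fun u => (hVc.integral_hasStrictDerivAt 0 u).hasDerivAt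
  have hU' : deriv U = V := funext fun u => (hU u).deriv
  have hU'' : deriv (deriv U) = w := by
    rw [hU']
    exact funext fun u => (hV u).deriv
  -- a primitive of `U' f'` obtained by parts, so that `f'` need not be integrable
  set F := fun u => V u * f u - ∫ t in (0 : ℝ)..u, w t * f t
  have hF : ∀ u, HasDerivAt F (V u * deriv f u) u := by
    intro u
    refine (((hV u).mul (hf u).hasDerivAt).sub
      ((hw.mul hf.continuous).integral_hasStrictDerivAt 0 u).hasDerivAt).congr_deriv ?_
    rw [Pi.mul_apply]
    ring
  refine ⟨U, F, ?_, hU'', fun u => (hF u).differentiableAt, fun u => by rw [hU', (hF u).deriv]⟩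
  rw [show (2 : WithTop ℕ∞) = 1 + 1 by norm_num, contDiff_succ_iff_deriv, hU',
    contDiff_one_iff_deriv, funext fun u => (hV u).deriv]
  exact ⟨fun u => (hU u).differentiableAt, by simp, fun u => (hV u).differentiableAt, hw⟩

theorem integral_nonneg_of_mem_entropySet (hf : Differentiable ℝ f) {uB u₀ : ℝ}
    (h : u₀ ∈ entropySet f uB) {w : ℝ → ℝ} (hw : Continuous w) (hw0 : ∀ t, 0 ≤ w t) :
    0 ≤ ∫ t in uB..u₀, w t * (f t - f u₀) := by
  obtain ⟨U, F, hU, hU'', hF, hF'⟩ := exists_entropyPair_deriv_deriv_eq hf hw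
  have hgap := entropy_gap_eq_integral hf hU hF hF' uB u₀
  rw [hU''] at hgap
  linarith [h U F hU (hU'' ▸ hw0) hF hF']

end EntropyPairs

theorem self_mem_blnSet (uB : ℝ) : uB ∈ blnSet f uB :=
  ⟨fun _ ht => (congrArg f (le_antisymm ht.2 ht.1)).ge,
    fun _ ht => (congrArg f (le_antisymm ht.2 ht.1)).le⟩

theorem entropySet_eq_blnSet (hf : Differentiable ℝ f) (uB : ℝ) :
    entropySet f uB = blnSet f uB := by
  ext u₀
  constructor
  · intro h
    rcases lt_trichotomy uB u₀ with hlt | rfl | hgt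
    · refine ⟨fun t ht => sub_nonneg.1 ?_, fun t ht => absurd (ht.1.trans ht.2) hlt.not_ge⟩
      exact nonneg_of_forall_integral_mul_nonneg (hf.continuous.sub continuous_const) hlt
        (fun w hw hw0 => integral_nonneg_of_mem_entropySet hf h hw hw0) t ht
    · exact self_mem_blnSet uB
    · refine ⟨fun t ht => absurd (ht.1.trans ht.2) hgt.not_ge, fun t ht => sub_nonneg.1 ?_⟩
      refine nonneg_of_forall_integral_mul_nonneg (g := fun s => f u₀ - f s)
        (continuous_const.sub hf.continuous) hgt (fun w hw hw0 => ?_) t ht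
      rw [← integral_mul_sub_symm]
      exact integral_nonneg_of_mem_entropySet hf h hw hw0
  · intro h U F hU hU'' hF hF'
    have hgap := entropy_gap_eq_integral hf hU hF hF' uB u₀
    suffices 0 ≤ ∫ t in uB..u₀, deriv (deriv U) t * (f t - f u₀) by linarith
    rcases le_total uB u₀ with hle | hle
    · exact integral_nonneg hle fun t ht => mul_nonneg (hU'' t) (sub_nonneg.2 (h.1 t ht))
    · rw [integral_mul_sub_symm]
      exact integral_nonneg hle fun t ht => mul_nonneg (hU'' t) (sub_nonneg.2 (h.2 t ht))

theorem neg_mem_blnSet_neg (hf : ∀ u, f (-u) = -f u) {uB u₀ : ℝ}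
    (h : u₀ ∈ blnSet f uB) : -u₀ ∈ blnSet f (-uB) := by
  refine ⟨fun t ht => ?_, fun t ht => ?_⟩
  · have := h.2 (-t) ⟨by linarith [ht.2], by linarith [ht.1]⟩
    linarith [hf t, hf u₀]
  · have := h.1 (-t) ⟨by linarith [ht.2], by linarith [ht.1]⟩
    linarith [hf t, hf u₀]

theorem blnSet_neg (hf : ∀ u, f (-u) = -f u) (uB : ℝ) :
    blnSet f (-uB) = -blnSet f uB := by
  ext u₀
  rw [mem_neg]
  exact ⟨fun h => by simpa using neg_mem_blnSet_neg hf h,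
    fun h => by simpa using neg_mem_blnSet_neg hf h⟩

section Monotone

variable {a b : ℝ}

theorem blnSet_eq_Icc (hleft : StrictMonoOn f (Iic a)) (hmid : StrictAntiOn f (Icc a b))
    (hright : StrictMonoOn f (Ici b)) {uB : ℝ} (huB : uB ∈ Icc a b) :
    blnSet f uB = Icc a b := by
  ext u₀
  constructor
  · rintro ⟨hge, hle⟩
    by_contra hout
    rw [mem_Icc, not_and_or, not_le, not_le] at hout
    rcases hout with h | h
    · exact (hleft h.le self_mem_Iic h).not_ge (hle a ⟨h.le, huB.1⟩)
    · exact (hright self_mem_Ici h.le h).not_ge (hge b ⟨huB.2, h.le⟩)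
  · intro hu₀
    exact ⟨fun t ht => hmid.antitoneOn ⟨huB.1.trans ht.1, ht.2.trans hu₀.2⟩ hu₀ ht.2,
      fun t ht => hmid.antitoneOn hu₀ ⟨hu₀.1.trans ht.1, ht.2.trans huB.2⟩ ht.1⟩

theorem blnSet_eq_of_lt (hab : a ≤ b) (hleft : StrictMonoOn f (Iic a))
    (hmid : StrictAntiOn f (Icc a b)) (hright : StrictMonoOn f (Ici b)) {uB : ℝ} (huB : uB < a) :
    blnSet f uB = {uB} ∪ {u ∈ Icc a b | f u ≤ f uB} := by
  ext u₀
  constructor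
  · rintro ⟨hge, hle⟩
    rcases lt_trichotomy u₀ uB with hlt | rfl | hgt
    · exact absurd (hle uB ⟨hlt.le, le_rfl⟩) (hleft (hlt.trans huB).le huB.le hlt).not_ge
    · exact Or.inl rfl
    · have hfu₀ : f u₀ ≤ f uB := hge uB ⟨le_rfl, hgt.le⟩
      have ha : a ≤ u₀ := by
        by_contra! h
        exact (hleft huB.le h.le hgt).not_ge hfu₀
      have hb : u₀ ≤ b := by
        by_contra! h
        exact (hright self_mem_Ici h.le h).not_ge (hge b ⟨huB.le.trans hab, h.le⟩)
      exact Or.inr ⟨⟨ha, hb⟩, hfu₀⟩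
  · rintro (rfl | ⟨hu₀, hfu₀⟩)
    · exact self_mem_blnSet _
    · refine ⟨fun t ht => ?_, fun t ht => absurd (ht.1.trans ht.2) (huB.trans_le hu₀.1).not_ge⟩
      rcases le_total t a with hta | hat
      · exact hfu₀.trans (hleft.monotoneOn huB.le hta ht.1)
      · exact hmid.antitoneOn ⟨hat, ht.2.trans hu₀.2⟩ hu₀ ht.2

theorem sep_apply_le_eq_Icc (hmid : StrictAntiOn f (Icc a b)) {r : ℝ} (hr : r ∈ Icc a b) :
    {u ∈ Icc a b | f u ≤ f r} = Icc r b := by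
  ext u
  exact ⟨fun ⟨hu, hfu⟩ => ⟨(hmid.le_iff_ge hu hr).1 hfu, hu.2⟩,
    fun hu => ⟨⟨hr.1.trans hu.1, hu.2⟩, hmid.antitoneOn hr ⟨hr.1.trans hu.1, hu.2⟩ hu.1⟩⟩

theorem mem_Icc_of_apply_eq (hleft : StrictMonoOn f (Iic a)) (hright : StrictMonoOn f (Ici b))
    {uB r s : ℝ} (huB : uB ≤ a) (hr : r ≠ uB) (hfr : f r = f uB) (hrs : r < s)
    (hfs : f s = f uB) : r ∈ Icc a b := by
  constructor
  · by_contra! h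
    exact hr (hleft.injOn h.le huB hfr)
  · by_contra! h
    exact hrs.ne (hright.injOn h.le (h.trans hrs).le (hfr.trans hfs.symm))

end Monotone

theorem hasDerivAt_cubicFlux (u : ℝ) : HasDerivAt cubicFlux ((3 * u ^ 2 - 3) / 2) u := by
  unfold cubicFlux
  refine (((hasDerivAt_pow 3 u).sub ((hasDerivAt_id u).const_mul 3)).div_const 2).congr_deriv ?_
  norm_num

theorem differentiable_cubicFlux : Differentiable ℝ cubicFlux :=
  fun u => (hasDerivAt_cubicFlux u).differentiableAt

theorem cubicFlux_neg (u : ℝ) : cubicFlux (-u) = -cubicFlux u := by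
  unfold cubicFlux
  ring

theorem strictMonoOn_cubicFlux_Iic : StrictMonoOn cubicFlux (Iic (-1)) := by
  refine strictMonoOn_of_deriv_pos (convex_Iic _)
    differentiable_cubicFlux.continuous.continuousOn fun u hu => ?_
  rw [interior_Iic, mem_Iio] at hu
  rw [(hasDerivAt_cubicFlux u).deriv]
  nlinarith

theorem strictAntiOn_cubicFlux_Icc : StrictAntiOn cubicFlux (Icc (-1) 1) := by
  refine strictAntiOn_of_deriv_neg (convex_Icc _ _)
    differentiable_cubicFlux.continuous.continuousOn fun u hu => ?_
  rw [interior_Icc, mem_Ioo] at hu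
  rw [(hasDerivAt_cubicFlux u).deriv]
  nlinarith

theorem strictMonoOn_cubicFlux_Ici : StrictMonoOn cubicFlux (Ici 1) := by
  refine strictMonoOn_of_deriv_pos (convex_Ici _)
    differentiable_cubicFlux.continuous.continuousOn fun u hu => ?_
  rw [interior_Ici, mem_Ioi] at hu
  rw [(hasDerivAt_cubicFlux u).deriv]
  nlinarith

theorem cubicEntropySet_eq_blnSet (uB : ℝ) : cubicEntropySet uB = blnSet cubicFlux uB :=
  entropySet_eq_blnSet differentiable_cubicFlux uB

theorem cubicEntropySet_eq_neg (uB : ℝ) : cubicEntropySet uB = -cubicEntropySet (-uB) := by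
  rw [cubicEntropySet_eq_blnSet, cubicEntropySet_eq_blnSet, blnSet_neg cubicFlux_neg, neg_neg]

theorem cubicEntropySet_of_lt_neg_one {uB : ℝ} (huB : uB < -1) :
    cubicEntropySet uB = {uB} ∪ {u ∈ Icc (-1) 1 | cubicFlux u ≤ cubicFlux uB} :=
  (cubicEntropySet_eq_blnSet uB).trans <| blnSet_eq_of_lt (by norm_num)
    strictMonoOn_cubicFlux_Iic strictAntiOn_cubicFlux_Icc strictMonoOn_cubicFlux_Ici huB

theorem cubicEntropySet_of_lt_neg_two {uB : ℝ} (huB : uB < -2) : cubicEntropySet uB = {uB} := by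
  rw [cubicEntropySet_of_lt_neg_one (by linarith), union_eq_left]
  rintro u ⟨hu, hfu⟩
  have : cubicFlux uB < cubicFlux u := calc
    cubicFlux uB < cubicFlux (-2) :=
      strictMonoOn_cubicFlux_Iic (huB.le.trans (by norm_num)) (by norm_num) huB
    _ = cubicFlux 1 := by norm_num [cubicFlux]
    _ ≤ cubicFlux u := strictAntiOn_cubicFlux_Icc.antitoneOn hu (by norm_num) hu.2
  exact absurd hfu this.not_ge

theorem cubicEntropySet_eq_Icc_union {uB r : ℝ} (huB : uB < -1) (hr : r ∈ Icc (-1) 1)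
    (hfr : cubicFlux r = cubicFlux uB) : cubicEntropySet uB = Icc r 1 ∪ {uB} := by
  rw [cubicEntropySet_of_lt_neg_one huB, ← hfr, sep_apply_le_eq_Icc strictAntiOn_cubicFlux_Icc hr,
    union_comm]

theorem cubicEntropySet_neg_two : cubicEntropySet (-2) = {-2, 1} := by
  rw [cubicEntropySet_eq_Icc_union (r := 1) (by norm_num) (by norm_num) (by norm_num [cubicFlux]),
    Icc_self, singleton_union, pair_comm]

theorem cubicEntropySet_of_mem_Icc {uB : ℝ} (huB : uB ∈ Icc (-1) 1) :
    cubicEntropySet uB = Icc (-1) 1 :=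
  (cubicEntropySet_eq_blnSet uB).trans <| blnSet_eq_Icc
    strictMonoOn_cubicFlux_Iic strictAntiOn_cubicFlux_Icc strictMonoOn_cubicFlux_Ici huB

/-- Theorem 4.2, part 1, entropy set for the cubic flux
`f(u) = (u³−3u)/2`. Here, whenever the equation `f(u) = f(u_B)`, `u ≠ u_B`,
has exactly two solutions, `u_B^s < u_B^ℓ` denote the smaller and larger one. -/
theorem cubicEntropySet_eq (uB : ℝ) :
    (uB < -2 → cubicEntropySet uB = {uB}) ∧
    (uB = -2 → cubicEntropySet uB = {-2, 1}) ∧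
    (-2 < uB → uB < -1 → ∀ uBs uBl : ℝ, uBs < uBl →
      uBs ≠ uB → cubicFlux uBs = cubicFlux uB →
      uBl ≠ uB → cubicFlux uBl = cubicFlux uB →
      (∀ u : ℝ, u ≠ uB → cubicFlux u = cubicFlux uB → u = uBs ∨ u = uBl) →
      cubicEntropySet uB = Set.Icc uBs 1 ∪ {uB}) ∧
    (-1 ≤ uB → uB ≤ 1 → cubicEntropySet uB = Set.Icc (-1) 1) ∧
    (1 < uB → uB < 2 → ∀ uBs uBl : ℝ, uBs < uBl →
      uBs ≠ uB → cubicFlux uBs = cubicFlux uB →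
      uBl ≠ uB → cubicFlux uBl = cubicFlux uB →
      (∀ u : ℝ, u ≠ uB → cubicFlux u = cubicFlux uB → u = uBs ∨ u = uBl) →
      cubicEntropySet uB = Set.Icc (-1) uBl ∪ {uB}) ∧
    (uB = 2 → cubicEntropySet uB = {-1, 2}) ∧
    (2 < uB → cubicEntropySet uB = {uB}) := by
  refine ⟨cubicEntropySet_of_lt_neg_two, ?_, ?_, fun h₁ h₂ => cubicEntropySet_of_mem_Icc ⟨h₁, h₂⟩,
    ?_, ?_, ?_⟩
  · rintro rfl
    exact cubicEntropySet_neg_two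
  · intro _ huB uBs uBl hsl hs hfs _ hfl _
    exact cubicEntropySet_eq_Icc_union huB (mem_Icc_of_apply_eq strictMonoOn_cubicFlux_Iic
      strictMonoOn_cubicFlux_Ici huB.le hs hfs hsl hfl) hfs
  · intro huB _ uBs uBl hsl _ hfs hl hfl _
    have hfneg : ∀ u, cubicFlux u = cubicFlux uB → cubicFlux (-u) = cubicFlux (-uB) := by
      intro u hu
      rw [cubicFlux_neg, cubicFlux_neg, hu]
    rw [cubicEntropySet_eq_neg, cubicEntropySet_eq_Icc_union (r := -uBl) (by linarith)
      (mem_Icc_of_apply_eq strictMonoOn_cubicFlux_Iic strictMonoOn_cubicFlux_Ici (by linarith)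
        (neg_injective.ne hl) (hfneg _ hfl) (neg_lt_neg hsl) (hfneg _ hfs)) (hfneg _ hfl),
      union_neg, neg_Icc, neg_singleton, neg_neg, neg_neg]
  · rintro rfl
    rw [cubicEntropySet_eq_neg, cubicEntropySet_neg_two, neg_insert, neg_singleton, neg_neg, pair_comm]
  · intro huB
    rw [cubicEntropySet_eq_neg, cubicEntropySet_of_lt_neg_two (by linarith), neg_singleton,
      neg_neg]
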